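/- Let y₁ < y₂, let u ∈ H⁴(y₁,y₂), let a ∈ (y₁,y₂) with u(a) = u_min (hence u'(a) = 0), and let β be a real with 0 < β ≤ u''(a). Then there exists δ₀ > 0 such that for every δ ∈ (0,δ₀] there is a constant C_δ > 0 (depending only on u, a and δ) with the property that for every real c < u_min and every φ ∈ H¹₀(y₁,y₂): ∫_{a−δ}^{a+δ} ( φ'(y)² + ((u''(y)−β)/(u(y)−c)) φ(y)² ) dy ≥ −C_δ ∫_{a−δ}^{a+δ} φ(y)² dy. -/

import Mathlib

open MeasureTheory Set Filter Topology

noncomputable section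

/-- The second derivative `u''` of `u` within `[y₁, y₂]`. -/
def D2 (y₁ y₂ : ℝ) (u : ℝ → ℝ) : ℝ → ℝ := iteratedDerivWithin 2 u (Set.Icc y₁ y₂)

/-- The first derivative `u'` of `u` within `[y₁, y₂]`. -/
def D1 (y₁ y₂ : ℝ) (u : ℝ → ℝ) : ℝ → ℝ := derivWithin u (Set.Icc y₁ y₂)

/-- `u_min`, the minimum of `u` on `[y₁, y₂]`. -/
def umin (y₁ y₂ : ℝ) (u : ℝ → ℝ) : ℝ := sInf (u '' Set.Icc y₁ y₂)

/-- `u_max`, the maximum of `u` on `[y₁, y₂]`. -/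
def umax (y₁ y₂ : ℝ) (u : ℝ → ℝ) : ℝ := sSup (u '' Set.Icc y₁ y₂)

/-- `u ∈ H⁴(y₁,y₂)`: `u` is three times continuously differentiable on `[y₁,y₂]` and `u'''`
is the primitive of an `L²` function. -/
def MemH4 (y₁ y₂ : ℝ) (u : ℝ → ℝ) : Prop :=
  ContDiffOn ℝ 3 u (Set.Icc y₁ y₂) ∧
  ∃ g : ℝ → ℝ, MeasureTheory.MemLp g 2 (volume.restrict (Set.Ioo y₁ y₂)) ∧
    ∀ x ∈ Set.Icc y₁ y₂,
      iteratedDerivWithin 3 u (Set.Icc y₁ y₂) x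
        = iteratedDerivWithin 3 u (Set.Icc y₁ y₂) y₁ + ∫ t in y₁..x, g t

/-- Hypothesis (H1): `u ∈ H⁴(y₁,y₂)` and `u'' ≠ 0` on the critical level `{u' = 0}`. -/
def HypH1 (y₁ y₂ : ℝ) (u : ℝ → ℝ) : Prop :=
  MemH4 y₁ y₂ u ∧
  ∀ y ∈ Set.Icc y₁ y₂, D1 y₁ y₂ u y = 0 → D2 y₁ y₂ u y ≠ 0

/-- `φ ∈ H¹₀(y₁,y₂)` with (weak) derivative `φ'`: `φ'` is `L²`, `φ` is its primitive starting
from `φ(y₁) = 0`, and `φ(y₂) = 0`. -/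
def IsH10 (y₁ y₂ : ℝ) (φ φ' : ℝ → ℝ) : Prop :=
  MeasureTheory.MemLp φ' 2 (volume.restrict (Set.Ioo y₁ y₂)) ∧
  (∀ x ∈ Set.Icc y₁ y₂, φ x = ∫ t in y₁..x, φ' t) ∧
  φ y₂ = 0

/-- The space `H¹₀(y₁,y₂)`, as a set of functions. -/
def H10 (y₁ y₂ : ℝ) : Set (ℝ → ℝ) := {φ | ∃ φ', IsH10 y₁ y₂ φ φ'}

/-- The Rayleigh–Kuo energy `∫ (φ'² + ((u''−β)/(u−c)) φ²)`. -/
def energy (y₁ y₂ : ℝ) (u : ℝ → ℝ) (β c : ℝ) (φ φ' : ℝ → ℝ) : ℝ :=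
  ∫ y in y₁..y₂, ((φ' y) ^ 2 + ((D2 y₁ y₂ u y - β) / (u y - c)) * (φ y) ^ 2)

/-- The `n`-th eigenvalue `λ_n(c)` of the Rayleigh–Kuo boundary value problem, defined by the
variational (min-max) formula: the infimum, over all `n`-dimensional subspaces `V` of
`H¹₀(y₁,y₂)`, of the supremum of the energy over `L²`-normalized elements of `V`. -/
def lambdaRK (y₁ y₂ : ℝ) (u : ℝ → ℝ) (β c : ℝ) (n : ℕ) : ℝ :=
  sInf { M : ℝ | ∃ V : Submodule ℝ (ℝ → ℝ),
    (V : Set (ℝ → ℝ)) ⊆ H10 y₁ y₂ ∧ Module.finrank ℝ V = n ∧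
    M = sSup { E : ℝ | ∃ φ φ' : ℝ → ℝ, φ ∈ V ∧ IsH10 y₁ y₂ φ φ' ∧
        (∫ y in y₁..y₂, (φ y) ^ 2) = 1 ∧ E = energy y₁ y₂ u β c φ φ' } }

/-- `m_β` for `β > 0`: the number of points `a ∈ (y₁,y₂)` with `u(a) = u_min` and `u''(a) < β`. -/
def mBetaMin (y₁ y₂ : ℝ) (u : ℝ → ℝ) (β : ℝ) : ℕ :=
  Set.ncard {a ∈ Set.Ioo y₁ y₂ | u a = umin y₁ y₂ u ∧ D2 y₁ y₂ u a < β}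

/-- `m_β` for `β < 0`: the number of points `a ∈ (y₁,y₂)` with `u(a) = u_max` and `u''(a) > β`. -/
def mBetaMax (y₁ y₂ : ℝ) (u : ℝ → ℝ) (β : ℝ) : ℕ :=
  Set.ncard {a ∈ Set.Ioo y₁ y₂ | u a = umax y₁ y₂ u ∧ β < D2 y₁ y₂ u a}

/-!
Near `a` one has `u - c ≥ u''(a) (y - a)² / 4` and `u'' - β ≥ u'' - u''(a)`, so it suffices to
bound `∫ (u'' - u''(a)) / (u - c) φ²` from below, uniformly in `c < u_min`. Its integrand is only
`O(φ² / |y - a|)`; pairing `a + s` with `a - s` removes the odd part, and what is left is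
controlled by `|u''(a+s) + u''(a-s) - 2u''(a)| = O(s^{3/2})` (`u''' ∈ H¹` is ½-Hölder),
`|u(a+s) - u(a-s)| = O(s³)` and `|φ(a+s) - φ(a-s)| ≤ 2 √(s ∫ φ'²)`. The paired integrand is
then `≥ -(A/√s + B)`, integrable on `(0, δ]`, with `A, B` quadratic in `sup |φ|` and `‖φ'‖₂`.
Bounding `sup |φ|² ≤ ∫ φ² / δ + 4 δ ∫ φ'²` and absorbing the `∫ φ'²` terms into the kinetic
energy for small `δ` leaves a bound `-(C / √δ + 1) ∫ φ²`.
-/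

theorem sq_setIntegral_le_measureReal_mul {α : Type*} [MeasurableSpace α] {μ : Measure α}
    {t : Set α} {f : α → ℝ} (ht : μ t ≠ ⊤) (hf : MemLp f 2 (μ.restrict t)) :
    (∫ x in t, f x ∂μ) ^ 2 ≤ μ.real t * ∫ x in t, f x ^ 2 ∂μ := by
  have : IsFiniteMeasure (μ.restrict t) := isFiniteMeasure_restrict.2 ht
  rcases eq_or_ne (μ t) 0 with h0 | h0
  · simp [Measure.restrict_eq_zero.2 h0]
  have hpos : 0 < μ.real t := ENNReal.toReal_pos h0 ht
  have hJensen := (Even.convexOn_pow (n := 2) even_two).map_set_average_le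
    (continuous_pow 2).continuousOn isClosed_univ h0 ht (by simp)
    (hf.integrable one_le_two) hf.integrable_sq
  simp only [setAverage_eq, smul_eq_mul] at hJensen
  rw [mul_pow, inv_pow, ← div_eq_inv_mul, ← div_eq_inv_mul, div_le_div_iff₀ (by positivity) hpos]
    at hJensen
  nlinarith

theorem sq_sub_le_mul_setIntegral_sq {f g : ℝ → ℝ} {p q x y : ℝ}
    (hg : MemLp g 2 (volume.restrict (Icc p q))) (hpx : p ≤ x) (hxy : x ≤ y) (hyq : y ≤ q)
    (hfg : f y - f x = ∫ t in x..y, g t) :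
    (f y - f x) ^ 2 ≤ (y - x) * ∫ t in Icc p q, g t ^ 2 := by
  have hsub : Ioc x y ⊆ Icc p q := fun t ht => ⟨hpx.trans ht.1.le, ht.2.trans hyq⟩
  rw [hfg, intervalIntegral.integral_of_le hxy, ← Real.volume_real_Ioc_of_le hxy]
  refine (sq_setIntegral_le_measureReal_mul (by simp)
    (hg.mono_measure (Measure.restrict_mono hsub le_rfl))).trans
    (mul_le_mul_of_nonneg_left ?_ measureReal_nonneg)
  exact setIntegral_mono_set hg.integrable_sq (ae_of_all _ fun t => sq_nonneg _) hsub.eventuallyLE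

theorem sq_le_of_sq_sub_le {φ : ℝ → ℝ} {p q P : ℝ} (hpq : p < q)
    (hφ : ContinuousOn φ (Icc p q))
    (hP : ∀ x ∈ Icc p q, ∀ y ∈ Icc p q, x ≤ y → (φ y - φ x) ^ 2 ≤ (y - x) * P) :
    ∀ x ∈ Icc p q, φ x ^ 2 ≤ 2 * (∫ y in Icc p q, φ y ^ 2) / (q - p) + 2 * (q - p) * P := by
  have hP0 : 0 ≤ P := (mul_nonneg_iff_of_pos_left (sub_pos.2 hpq)).1
    ((sq_nonneg _).trans (hP p ⟨le_rfl, hpq.le⟩ q ⟨hpq.le, le_rfl⟩ hpq.le))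
  have hdiff : ∀ x ∈ Icc p q, ∀ y ∈ Icc p q, (φ x - φ y) ^ 2 ≤ (q - p) * P := by
    intro x hx y hy
    rcases le_total x y with hxy | hyx
    · rw [← neg_sub, neg_sq]
      exact (hP x hx y hy hxy).trans (mul_le_mul_of_nonneg_right (by linarith [hx.1, hy.2]) hP0)
    · exact (hP y hy x hx hyx).trans (mul_le_mul_of_nonneg_right (by linarith [hy.1, hx.2]) hP0)
  intro x hx
  obtain ⟨z, hz, hzavg⟩ := exists_le_setAverage (μ := volume) (f := fun y => φ y ^ 2)
    (by simp [hpq]) (by simp) ((hφ.pow 2).integrableOn_compact isCompact_Icc)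
  rw [setAverage_eq, Real.volume_real_Icc_of_le hpq.le, smul_eq_mul, ← div_eq_inv_mul] at hzavg
  rw [mul_div_assoc]
  nlinarith [hdiff x hx z hz, sq_nonneg (φ z - (φ x - φ z))]

theorem abs_le_sqrt_and_abs_sub_reflect_le {φ : ℝ → ℝ} {a δ P : ℝ} (hδ : 0 < δ)
    (hφ : ContinuousOn φ (Icc (a - δ) (a + δ)))
    (hP : ∀ x ∈ Icc (a - δ) (a + δ), ∀ y ∈ Icc (a - δ) (a + δ), x ≤ y →
      (φ y - φ x) ^ 2 ≤ (y - x) * P) :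
    (∀ x ∈ Icc (a - δ) (a + δ), |φ x| ≤ √((∫ y in Icc (a - δ) (a + δ), φ y ^ 2) / δ + 4 * δ * P))
      ∧ ∀ s ∈ Icc 0 δ, |φ (a + s) - φ (a - s)| ≤ 2 * √s * √P := by
  have hP0 : 0 ≤ P := (mul_nonneg_iff_of_pos_left (by linarith : (0 : ℝ) < a + δ - (a - δ))).1
    ((sq_nonneg _).trans (hP _ ⟨le_rfl, by linarith⟩ _ ⟨by linarith, le_rfl⟩ (by linarith)))
  refine ⟨fun x hx => Real.abs_le_sqrt ((sq_le_of_sq_sub_le (by linarith) hφ hP x hx).trans_eq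
    (by rw [show a + δ - (a - δ) = 2 * δ by ring]; field_simp; ring)), fun s hs => ?_⟩
  have h := hP (a - s) ⟨by linarith [hs.2], by linarith [hs.1]⟩ (a + s)
    ⟨by linarith [hs.1], by linarith [hs.2]⟩ (by linarith [hs.1])
  have hlen : a + s - (a - s) ≤ 2 ^ 2 * s := by linarith [hs.1]
  refine (Real.abs_le_sqrt (h.trans (mul_le_mul_of_nonneg_right hlen hP0))).trans_eq ?_
  rw [Real.sqrt_mul (by nlinarith [hs.1]), Real.sqrt_mul (by norm_num), Real.sqrt_sq (by norm_num)]

theorem sub_eq_integral_of_eq_add_integral {f g : ℝ → ℝ} {y₁ y₂ C x y : ℝ}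
    (hg : IntegrableOn g (Icc y₁ y₂)) (hf : ∀ z ∈ Icc y₁ y₂, f z = C + ∫ t in y₁..z, g t)
    (hx : x ∈ Icc y₁ y₂) (hy : y ∈ Icc y₁ y₂) : f y - f x = ∫ t in x..y, g t := by
  have hii : ∀ z ∈ Icc y₁ y₂, IntervalIntegrable g volume y₁ z := fun z hz =>
    (intervalIntegrable_iff_integrableOn_Icc_of_le hz.1).2 (hg.mono_set (Icc_subset_Icc_right hz.2))
  rw [hf y hy, hf x hx, add_sub_add_left_eq_sub,
    intervalIntegral.integral_interval_sub_left (hii y hy) (hii x hx)]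

theorem memLp_Icc_of_memLp_Ioo {g : ℝ → ℝ} {y₁ y₂ : ℝ}
    (hg : MemLp g 2 (volume.restrict (Ioo y₁ y₂))) : MemLp g 2 (volume.restrict (Icc y₁ y₂)) := by
  rwa [← Measure.restrict_congr_set Ioo_ae_eq_Icc]

theorem hasDerivAt_iteratedDerivWithin {f : ℝ → ℝ} {s : Set ℝ} {n : ℕ} {x : ℝ}
    (hf : ContDiffOn ℝ (n + 1) f s) (hs : UniqueDiffOn ℝ s) (hx : s ∈ 𝓝 x) :
    HasDerivAt (iteratedDerivWithin n f s) (iteratedDerivWithin (n + 1) f s x) x := by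
  rw [iteratedDerivWithin_succ, derivWithin_of_mem_nhds hx]
  have hdiff := hf.differentiableOn_iteratedDerivWithin (m := n) (by exact_mod_cast lt_add_one n) hs
  exact ((hdiff x (mem_of_mem_nhds hx)).differentiableAt hx).hasDerivAt

theorem abs_sub_le_mul_of_hasDerivAt {g g' : ℝ → ℝ} {s M : ℝ} (hs : 0 ≤ s)
    (hg : ∀ t ∈ Icc 0 s, HasDerivAt g (g' t) t) (hM : ∀ t ∈ Icc 0 s, |g' t| ≤ M) :
    |g s - g 0| ≤ M * s := by
  simpa using norm_image_sub_le_of_norm_deriv_le_segment'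
    (fun t ht => (hg t ht).hasDerivWithinAt) (fun t ht => hM t (Ico_subset_Icc_self ht))
    s ⟨hs, le_rfl⟩

theorem le_of_hasDerivAt_nonneg {g g' : ℝ → ℝ} {s : ℝ} (hs : 0 ≤ s)
    (hg : ∀ t ∈ Icc 0 s, HasDerivAt g (g' t) t) (hg' : ∀ t ∈ Icc 0 s, 0 ≤ g' t) :
    g 0 ≤ g s := by
  have hint : interior (Icc 0 s) ⊆ Icc 0 s := interior_subset
  refine monotoneOn_of_hasDerivWithinAt_nonneg (convex_Icc 0 s)
    (fun t ht => (hg t ht).continuousAt.continuousWithinAt)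
    (fun t ht => (hg t (hint ht)).hasDerivWithinAt) (fun t ht => hg' t (hint ht))
    ⟨le_rfl, hs⟩ ⟨hs, le_rfl⟩ hs

theorem mul_sq_le_sub_of_le_deriv2 {v v₁ v₂ : ℝ → ℝ} {m s : ℝ} (hs : 0 ≤ s)
    (hv : ∀ t ∈ Icc 0 s, HasDerivAt v (v₁ t) t) (hv₁ : ∀ t ∈ Icc 0 s, HasDerivAt v₁ (v₂ t) t)
    (h0 : v₁ 0 = 0) (hm : ∀ t ∈ Icc 0 s, m ≤ v₂ t) :
    m / 2 * s ^ 2 ≤ v s - v 0 := by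
  have hlin : ∀ t ∈ Icc 0 s, m * t ≤ v₁ t := by
    intro t ht
    have hsub : Icc 0 t ⊆ Icc 0 s := Icc_subset_Icc_right ht.2
    have := le_of_hasDerivAt_nonneg (g := fun τ => v₁ τ - m * τ) ht.1
      (fun τ hτ => (hv₁ τ (hsub hτ)).sub ((hasDerivAt_id τ).const_mul m))
      (fun τ hτ => by simpa using hm τ (hsub hτ))
    simp only [h0, mul_zero, sub_zero] at this
    linarith
  have := le_of_hasDerivAt_nonneg (g := fun τ => v τ - m / 2 * τ ^ 2) hs
    (fun τ hτ => (hv τ hτ).sub ((hasDerivAt_pow 2 τ).const_mul (m / 2)))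
    (fun τ hτ => by have := hlin τ hτ; simp only [Nat.cast_ofNat]; linarith)
  linarith

theorem abs_sub_reflect_le {f f' : ℝ → ℝ} {a s M : ℝ} (hs : 0 ≤ s)
    (hf : ∀ x ∈ Icc (a - s) (a + s), HasDerivAt f (f' x) x)
    (hM : ∀ t ∈ Icc 0 s, |f' (a + t) + f' (a - t)| ≤ M) :
    |f (a + s) - f (a - s)| ≤ M * s := by
  have := abs_sub_le_mul_of_hasDerivAt (g := fun t => f (a + t) - f (a - t))
    (g' := fun t => f' (a + t) + f' (a - t)) hs
    (fun t ht => by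
      have hpos := (hf (a + t) ⟨by linarith [ht.1], by linarith [ht.2]⟩).comp_const_add a t
      have hneg := (hf (a - t) ⟨by linarith [ht.2], by linarith [ht.1]⟩).comp_const_sub a t
      exact (hpos.fun_sub hneg).congr_deriv (sub_neg_eq_add _ _)) hM
  simpa using this

theorem abs_add_reflect_sub_le {f f' : ℝ → ℝ} {a s M : ℝ} (hs : 0 ≤ s)
    (hf : ∀ x ∈ Icc (a - s) (a + s), HasDerivAt f (f' x) x)
    (hM : ∀ t ∈ Icc 0 s, |f' (a + t) - f' (a - t)| ≤ M) :
    |f (a + s) + f (a - s) - 2 * f a| ≤ M * s := by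
  have := abs_sub_le_mul_of_hasDerivAt (g := fun t => f (a + t) + f (a - t))
    (g' := fun t => f' (a + t) - f' (a - t)) hs
    (fun t ht => by
      have hpos := (hf (a + t) ⟨by linarith [ht.1], by linarith [ht.2]⟩).comp_const_add a t
      have hneg := (hf (a - t) ⟨by linarith [ht.2], by linarith [ht.1]⟩).comp_const_sub a t
      exact (hpos.fun_add hneg).congr_deriv (sub_eq_add_neg _ _).symm) hM
  simpa [two_mul] using this

theorem abs_sub_reflect_le_of_abs_deriv3_le {u u₁ u₂ u₃ : ℝ → ℝ} {a r L : ℝ}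
    (hu : ∀ x ∈ Icc (a - r) (a + r), HasDerivAt u (u₁ x) x)
    (hu₁ : ∀ x ∈ Icc (a - r) (a + r), HasDerivAt u₁ (u₂ x) x)
    (hu₂ : ∀ x ∈ Icc (a - r) (a + r), HasDerivAt u₂ (u₃ x) x)
    (hL : ∀ x ∈ Icc (a - r) (a + r), |u₃ x| ≤ L) (hu₁a : u₁ a = 0) :
    ∀ s ∈ Icc 0 r, |u (a + s) - u (a - s)| ≤ 2 * L * s ^ 3 := by
  have hIcc : ∀ s ∈ Icc 0 r, Icc (a - s) (a + s) ⊆ Icc (a - r) (a + r) := fun s hs =>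
    Icc_subset_Icc (by linarith [hs.2]) (by linarith [hs.2])
  have hL0 : ∀ s ∈ Icc 0 r, 0 ≤ L := fun s hs =>
    (abs_nonneg _).trans (hL a ⟨by linarith [hs.1, hs.2], by linarith [hs.1, hs.2]⟩)
  have hodd2 : ∀ t ∈ Icc 0 r, |u₂ (a + t) - u₂ (a - t)| ≤ 2 * L * t := fun t ht =>
    abs_sub_reflect_le ht.1 (fun x hx => hu₂ x (hIcc t ht hx)) fun τ hτ => by
      linarith [abs_add_le (u₃ (a + τ)) (u₃ (a - τ)),
        hL (a + τ) (hIcc t ht ⟨by linarith [hτ.1, hτ.2], by linarith [hτ.2]⟩),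
        hL (a - τ) (hIcc t ht ⟨by linarith [hτ.2], by linarith [hτ.1, hτ.2]⟩)]
  have heven1 : ∀ t ∈ Icc 0 r, |u₁ (a + t) + u₁ (a - t)| ≤ 2 * L * t ^ 2 := fun t ht => by
    have := abs_add_reflect_sub_le (M := 2 * L * t) ht.1 (fun x hx => hu₁ x (hIcc t ht hx))
      fun τ hτ => (hodd2 τ ⟨hτ.1, hτ.2.trans ht.2⟩).trans
        (mul_le_mul_of_nonneg_left hτ.2 (by linarith [hL0 t ht]))
    rw [hu₁a, mul_zero, sub_zero] at this
    linarith
  intro s hs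
  have := abs_sub_reflect_le (M := 2 * L * s ^ 2) hs.1 (fun x hx => hu x (hIcc s hs hx))
    fun t ht => (heven1 t ⟨ht.1, ht.2.trans hs.2⟩).trans
      (mul_le_mul_of_nonneg_left (pow_le_pow_left₀ ht.1 ht.2 2) (by linarith [hL0 s hs]))
  linarith

theorem mul_sq_le_sub_reflect {u u₁ u₂ : ℝ → ℝ} {a r m : ℝ}
    (hu : ∀ x ∈ Icc (a - r) (a + r), HasDerivAt u (u₁ x) x)
    (hu₁ : ∀ x ∈ Icc (a - r) (a + r), HasDerivAt u₁ (u₂ x) x) (hu₁a : u₁ a = 0)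
    (hm : ∀ x ∈ Icc (a - r) (a + r), 2 * m ≤ u₂ x) :
    ∀ s ∈ Icc 0 r, m * s ^ 2 ≤ u (a + s) - u a ∧ m * s ^ 2 ≤ u (a - s) - u a := by
  intro s hs
  have hadd : ∀ t ∈ Icc 0 s, a + t ∈ Icc (a - r) (a + r) := fun t ht =>
    ⟨by linarith [ht.1, hs.1, hs.2], by linarith [ht.2, hs.2]⟩
  have hsub : ∀ t ∈ Icc 0 s, a - t ∈ Icc (a - r) (a + r) := fun t ht =>
    ⟨by linarith [ht.2, hs.2], by linarith [ht.1, hs.1, hs.2]⟩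
  have hright := mul_sq_le_sub_of_le_deriv2 (v := fun t => u (a + t))
    (v₁ := fun t => u₁ (a + t)) (v₂ := fun t => u₂ (a + t)) hs.1
    (fun t ht => (hu _ (hadd t ht)).comp_const_add a t)
    (fun t ht => (hu₁ _ (hadd t ht)).comp_const_add a t)
    (by simpa using hu₁a) (fun t ht => hm _ (hadd t ht))
  have hleft := mul_sq_le_sub_of_le_deriv2 (v := fun t => u (a - t))
    (v₁ := fun t => -u₁ (a - t)) (v₂ := fun t => u₂ (a - t)) hs.1
    (fun t ht => (hu _ (hsub t ht)).comp_const_sub a t)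
    (fun t ht => ((hu₁ _ (hsub t ht)).comp_const_sub a t).fun_neg.congr_deriv (neg_neg _))
    (by simpa using hu₁a) (fun t ht => hm _ (hsub t ht))
  simp only [add_zero, sub_zero] at hright hleft
  constructor <;> linarith

/-- Estimates on `u` along the reflection `a ± s`, with `u₂` in the role of `u''`. -/
structure ReflectionBounds (u u₂ : ℝ → ℝ) (a r m L K : ℝ) : Prop where
  deriv2_sub_le : ∀ s ∈ Icc 0 r, |u₂ (a + s) - u₂ a| ≤ L * s
  deriv2_add_le : ∀ s ∈ Icc 0 r, |u₂ (a + s) + u₂ (a - s) - 2 * u₂ a| ≤ K * s * √s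
  sub_reflect_le : ∀ s ∈ Icc 0 r, |u (a + s) - u (a - s)| ≤ 2 * L * s ^ 3
  le_sub_right : ∀ s ∈ Icc 0 r, m * s ^ 2 ≤ u (a + s) - u a
  le_sub_left : ∀ s ∈ Icc 0 r, m * s ^ 2 ≤ u (a - s) - u a

theorem reflectionBounds_of_hasDerivAt {u u₁ u₂ u₃ : ℝ → ℝ} {a r L K : ℝ} (hK : 0 ≤ K)
    (hu : ∀ x ∈ Icc (a - r) (a + r), HasDerivAt u (u₁ x) x)
    (hu₁ : ∀ x ∈ Icc (a - r) (a + r), HasDerivAt u₁ (u₂ x) x)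
    (hu₂ : ∀ x ∈ Icc (a - r) (a + r), HasDerivAt u₂ (u₃ x) x)
    (hL : ∀ x ∈ Icc (a - r) (a + r), |u₃ x| ≤ L)
    (hu₃ : ∀ t ∈ Icc 0 r, |u₃ (a + t) - u₃ (a - t)| ≤ K * √t)
    (hu₁a : u₁ a = 0) (hLr : 2 * L * r ≤ u₂ a) :
    ReflectionBounds u u₂ a r (u₂ a / 4) L K := by
  have hlip : ∀ x ∈ Icc (a - r) (a + r), |u₂ x - u₂ a| ≤ L * |x - a| := fun x hx =>
    (convex_Icc _ _).norm_image_sub_le_of_norm_hasDerivWithin_le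
      (fun y hy => (hu₂ y hy).hasDerivWithinAt) hL
      ⟨by linarith [hx.1, hx.2], by linarith [hx.1, hx.2]⟩ hx
  have hm : ∀ x ∈ Icc (a - r) (a + r), 2 * (u₂ a / 4) ≤ u₂ x := fun x hx => by
    have h2 : |x - a| ≤ r := abs_sub_le_iff.2 ⟨by linarith [hx.2], by linarith [hx.1]⟩
    have h3 := mul_le_mul_of_nonneg_left h2 ((abs_nonneg _).trans (hL x hx))
    linarith [neg_abs_le (u₂ x - u₂ a), hlip x hx]
  have hgap := mul_sq_le_sub_reflect hu hu₁ hu₁a hm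
  refine ⟨fun s hs => ?_, fun s hs => ?_, abs_sub_reflect_le_of_abs_deriv3_le hu hu₁ hu₂ hL hu₁a,
    fun s hs => (hgap s hs).1, fun s hs => (hgap s hs).2⟩
  · simpa [abs_of_nonneg hs.1] using hlip (a + s) ⟨by linarith [hs.1, hs.2], by linarith [hs.2]⟩
  · refine (abs_add_reflect_sub_le (M := K * √s) hs.1
      (fun x hx => hu₂ x ⟨by linarith [hx.1, hs.2], by linarith [hx.2, hs.2]⟩)
      fun t ht => ?_).trans_eq (by ring)
    calc |u₃ (a + t) - u₃ (a - t)| ≤ K * √t := hu₃ t ⟨ht.1, ht.2.trans hs.2⟩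
      _ ≤ K * √s := mul_le_mul_of_nonneg_left (Real.sqrt_le_sqrt ht.2) hK

theorem rpow_neg_half_eq_inv_sqrt {s : ℝ} (hs : 0 ≤ s) : s ^ (-(1 / 2) : ℝ) = (√s)⁻¹ := by
  rw [Real.sqrt_eq_rpow, Real.rpow_neg hs]

theorem integral_inv_sqrt {δ : ℝ} (hδ : 0 ≤ δ) : ∫ s in (0 : ℝ)..δ, (√s)⁻¹ = 2 * √δ := by
  rw [← intervalIntegral.integral_congr fun s hs =>
      rpow_neg_half_eq_inv_sqrt (by rw [uIcc_of_le hδ] at hs; exact hs.1),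
    integral_rpow (Or.inl (by norm_num)), Real.zero_rpow (by norm_num), Real.sqrt_eq_rpow]
  ring_nf

theorem intervalIntegrable_inv_sqrt {δ : ℝ} (hδ : 0 ≤ δ) :
    IntervalIntegrable (fun s => (√s)⁻¹) volume 0 δ :=
  (intervalIntegral.intervalIntegrable_rpow' (by norm_num)).congr fun s hs =>
    rpow_neg_half_eq_inv_sqrt (by rw [uIoc_of_le hδ] at hs; exact hs.1.le)

theorem intervalIntegrable_halves {F : ℝ → ℝ} {a δ : ℝ} (hδ : 0 ≤ δ)
    (hF : IntegrableOn F (Icc (a - δ) (a + δ))) :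
    IntervalIntegrable F volume (a - δ) a ∧ IntervalIntegrable F volume a (a + δ) :=
  ⟨(intervalIntegrable_iff_integrableOn_Icc_of_le (by linarith)).2
      (hF.mono_set (Icc_subset_Icc_right (by linarith))),
    (intervalIntegrable_iff_integrableOn_Icc_of_le (by linarith)).2
      (hF.mono_set (Icc_subset_Icc_left (by linarith)))⟩

theorem intervalIntegrable_add_reflect {F : ℝ → ℝ} {a δ : ℝ} (hδ : 0 ≤ δ)
    (hF : IntegrableOn F (Icc (a - δ) (a + δ))) :
    IntervalIntegrable (fun s => F (a + s) + F (a - s)) volume 0 δ := by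
  obtain ⟨hleft, hright⟩ := intervalIntegrable_halves hδ hF
  have hplus : IntervalIntegrable (fun s => F (a + s)) volume 0 δ := by
    simpa using hright.comp_add_left a
  have hminus : IntervalIntegrable (fun s => F (a - s)) volume 0 δ := by
    simpa using hleft.symm.comp_sub_left a
  exact hplus.add hminus

theorem setIntegral_Icc_eq_integral_add_reflect {F : ℝ → ℝ} {a δ : ℝ} (hδ : 0 ≤ δ)
    (hF : IntegrableOn F (Icc (a - δ) (a + δ))) :
    ∫ y in Icc (a - δ) (a + δ), F y = ∫ s in (0 : ℝ)..δ, (F (a + s) + F (a - s)) := by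
  obtain ⟨hleft, hright⟩ := intervalIntegrable_halves hδ hF
  have hplus : ∫ s in (0 : ℝ)..δ, F (a + s) = ∫ y in a..(a + δ), F y := by
    simp [intervalIntegral.integral_comp_add_left F a]
  have hminus : ∫ s in (0 : ℝ)..δ, F (a - s) = ∫ y in (a - δ)..a, F y := by
    simp [intervalIntegral.integral_comp_sub_left F a]
  rw [integral_Icc_eq_integral_Ioc, ← intervalIntegral.integral_of_le (by linarith),
    ← intervalIntegral.integral_add_adjacent_intervals hleft hright,
    intervalIntegral.integral_add, hplus, hminus, add_comm]
  · simpa using hright.comp_add_left a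
  · simpa using hleft.symm.comp_sub_left a

theorem abs_div_mul_le {x y z X Y Z : ℝ} (hx : |x| ≤ X) (hY : 0 < Y) (hy : Y ≤ y) (hz : |z| ≤ Z) :
    |x / y * z| ≤ X / Y * Z := by
  rw [abs_mul, abs_div, abs_of_pos (hY.trans_le hy)]
  exact mul_le_mul (div_le_div₀ ((abs_nonneg _).trans hx) hx hY hy) hz (abs_nonneg _)
    (div_nonneg ((abs_nonneg _).trans hx) hY.le)

theorem neg_le_div_mul_sq_add_div_mul_sq {r₁ r₂ d₁ d₂ p₁ p₂ s m L K S D : ℝ} (hs : 0 < s)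
    (hm : 0 < m) (hr₁ : |r₁| ≤ L * s) (hr : |r₁ + r₂| ≤ K * s * √s)
    (hd : |d₁ - d₂| ≤ 2 * L * s ^ 3) (hd₁ : m * s ^ 2 ≤ d₁) (hd₂ : m * s ^ 2 ≤ d₂)
    (hp₁ : |p₁| ≤ S) (hp₂ : |p₂| ≤ S) (hp : |p₁ - p₂| ≤ 2 * √s * D) :
    -((4 * L / m * S * D + K / m * S ^ 2) / √s + 2 * L ^ 2 / m ^ 2 * S ^ 2)
      ≤ r₁ / d₁ * p₁ ^ 2 + r₂ / d₂ * p₂ ^ 2 := by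
  obtain ⟨v, hv, rfl⟩ : ∃ v, 0 < v ∧ s = v ^ 2 :=
    ⟨√s, Real.sqrt_pos.2 hs, (Real.sq_sqrt hs.le).symm⟩
  rw [Real.sqrt_sq hv.le] at hr hp ⊢
  have hmv : 0 < m * (v ^ 2) ^ 2 := by positivity
  have hd₁0 := hmv.trans_le hd₁
  have hd₂0 := hmv.trans_le hd₂
  have hp₂sq : |p₂ ^ 2| ≤ S ^ 2 := by
    rw [abs_pow]; exact pow_le_pow_left₀ (abs_nonneg _) hp₂ 2
  have hpsq : |p₁ ^ 2 - p₂ ^ 2| ≤ 2 * v * D * (2 * S) := by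
    rw [sq_sub_sq, abs_mul, mul_comm]
    exact mul_le_mul hp ((abs_add_le _ _).trans (by linarith)) (abs_nonneg _)
      ((abs_nonneg _).trans hp)
  have hnum : |r₁ * (d₂ - d₁)| ≤ L * v ^ 2 * (2 * L * (v ^ 2) ^ 3) := by
    rw [abs_mul, abs_sub_comm]
    exact mul_le_mul hr₁ hd (abs_nonneg _) ((abs_nonneg _).trans hr₁)
  have hT₁ : |r₁ / d₁ * (p₁ ^ 2 - p₂ ^ 2)| ≤ 4 * L / m * S * D / v :=
    (abs_div_mul_le hr₁ hmv hd₁ hpsq).trans_eq (by field_simp; ring)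
  have hT₂ : |(r₁ + r₂) / d₂ * p₂ ^ 2| ≤ K / m * S ^ 2 / v :=
    (abs_div_mul_le hr hmv hd₂ hp₂sq).trans_eq (by field_simp)
  have hT₃ : |r₁ * (d₂ - d₁) / (d₁ * d₂) * p₂ ^ 2| ≤ 2 * L ^ 2 / m ^ 2 * S ^ 2 :=
    (abs_div_mul_le hnum (mul_pos hmv hmv) (mul_le_mul hd₁ hd₂ hmv.le hd₁0.le) hp₂sq).trans_eq
      (by field_simp)
  have hsplit : r₁ / d₁ * p₁ ^ 2 + r₂ / d₂ * p₂ ^ 2 = r₁ / d₁ * (p₁ ^ 2 - p₂ ^ 2)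
      + (r₁ + r₂) / d₂ * p₂ ^ 2 + r₁ * (d₂ - d₁) / (d₁ * d₂) * p₂ ^ 2 := by
    field_simp; ring
  rw [hsplit, add_div]
  linarith [neg_abs_le (r₁ / d₁ * (p₁ ^ 2 - p₂ ^ 2)), neg_abs_le ((r₁ + r₂) / d₂ * p₂ ^ 2),
    neg_abs_le (r₁ * (d₂ - d₁) / (d₁ * d₂) * p₂ ^ 2)]

theorem neg_div_sqrt_mul_le {A₁ A₂ A₃ δ N P S D : ℝ} (hA₃ : 0 ≤ A₃) (hδ : 0 < δ) (hδ1 : δ ≤ 1)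
    (hδA : 8 * (2 * A₁ ^ 2 + 2 * A₂ + A₃) * δ ≤ 1) (hP : 0 ≤ P)
    (hD : D ^ 2 = P) (hS : S ^ 2 = N / δ + 4 * δ * P) :
    -((2 * A₁ ^ 2 + 2 * A₂ + A₃) / √δ * N)
      ≤ P - (2 * √δ * (A₁ * S * D + A₂ * S ^ 2) + δ * (A₃ * S ^ 2)) := by
  set κ := 2 * A₁ ^ 2 + 2 * A₂ + A₃
  obtain ⟨t, ht, rfl⟩ : ∃ t, 0 < t ∧ δ = t ^ 2 :=
    ⟨√δ, Real.sqrt_pos.2 hδ, (Real.sq_sqrt hδ.le).symm⟩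
  rw [Real.sqrt_sq ht.le]
  have ht1 : t ≤ 1 := by nlinarith
  -- AM-GM puts the `S D` term into half of `P`, the smallness of `δ` the `δ P` part of `S²`.
  have hamgm : 2 * t * (A₁ * S * D) ≤ P / 2 + 2 * t ^ 2 * A₁ ^ 2 * S ^ 2 := by
    nlinarith [sq_nonneg (D - 2 * t * A₁ * S)]
  have hcoef : (2 * t ^ 2 * A₁ ^ 2 + 2 * t * A₂ + A₃ * t ^ 2) * S ^ 2 ≤ t * κ * S ^ 2 := by
    have htt : t ^ 2 ≤ t := by nlinarith
    refine mul_le_mul_of_nonneg_right ?_ (sq_nonneg S)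
    nlinarith [mul_le_mul_of_nonneg_right htt (sq_nonneg A₁), mul_le_mul_of_nonneg_right htt hA₃]
  have hκS : t * κ * S ^ 2 = κ / t * N + 4 * κ * t ^ 3 * P := by
    rw [hS]; field_simp
  have hsmall : 4 * κ * t ^ 3 * P ≤ P / 2 := by
    have : 8 * κ * t ^ 3 ≤ 1 := by nlinarith [mul_le_mul_of_nonneg_right hδA ht.le]
    nlinarith [mul_le_mul_of_nonneg_right this hP]
  nlinarith

theorem ReflectionBounds.neg_le_setIntegral {u u₂ φ : ℝ → ℝ} {a r m L K c δ S D : ℝ}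
    (hb : ReflectionBounds u u₂ a r m L K) (hm : 0 < m) (hc : c < u a) (hδ : 0 < δ)
    (hδr : δ ≤ r)
    (hF : IntegrableOn (fun y => (u₂ y - u₂ a) / (u y - c) * φ y ^ 2) (Icc (a - δ) (a + δ)))
    (hS : ∀ x ∈ Icc (a - δ) (a + δ), |φ x| ≤ S)
    (hD : ∀ s ∈ Icc 0 δ, |φ (a + s) - φ (a - s)| ≤ 2 * √s * D) :
    -(2 * √δ * (4 * L / m * S * D + K / m * S ^ 2) + δ * (2 * L ^ 2 / m ^ 2 * S ^ 2))
      ≤ ∫ y in Icc (a - δ) (a + δ), (u₂ y - u₂ a) / (u y - c) * φ y ^ 2 := by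
  set X := 4 * L / m * S * D + K / m * S ^ 2
  set Y := 2 * L ^ 2 / m ^ 2 * S ^ 2
  have hint : IntervalIntegrable (fun s => -(X / √s + Y)) volume 0 δ := by
    simp_rw [div_eq_mul_inv X]
    exact (((intervalIntegrable_inv_sqrt hδ.le).const_mul X).add intervalIntegrable_const).neg
  have hval : ∫ s in (0 : ℝ)..δ, -(X / √s + Y) = -(2 * √δ * X + δ * Y) := by
    simp_rw [div_eq_mul_inv X]
    rw [intervalIntegral.integral_neg, intervalIntegral.integral_add
      ((intervalIntegrable_inv_sqrt hδ.le).const_mul _) intervalIntegrable_const,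
      intervalIntegral.integral_const_mul, integral_inv_sqrt hδ.le, intervalIntegral.integral_const]
    simp only [sub_zero, smul_eq_mul]
    ring
  rw [setIntegral_Icc_eq_integral_add_reflect hδ.le hF, ← hval]
  refine intervalIntegral.integral_mono_on_of_le_Ioo hδ.le hint
    (intervalIntegrable_add_reflect hδ.le hF) fun s hs => ?_
  have hs' : s ∈ Icc 0 r := ⟨hs.1.le, hs.2.le.trans hδr⟩
  refine neg_le_div_mul_sq_add_div_mul_sq hs.1 hm (hb.deriv2_sub_le s hs')
    (by convert hb.deriv2_add_le s hs' using 2; ring)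
    (by convert hb.sub_reflect_le s hs' using 2; ring)
    (by linarith [hb.le_sub_right s hs']) (by linarith [hb.le_sub_left s hs'])
    (hS _ ⟨by linarith [hs.1, hs.2], by linarith [hs.1, hs.2]⟩)
    (hS _ ⟨by linarith [hs.1, hs.2], by linarith [hs.1, hs.2]⟩)
    (hD s ⟨hs.1.le, hs.2.le⟩)

/-- `2 A₁² + 2 A₂ + A₃` for the constants `A₁ = 4L/m`, `A₂ = K/m`, `A₃ = 2L²/m²` of
`neg_le_div_mul_sq_add_div_mul_sq`. -/
def reflectionConst (m L K : ℝ) : ℝ := 2 * (4 * L / m) ^ 2 + 2 * (K / m) + 2 * L ^ 2 / m ^ 2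

theorem ReflectionBounds.neg_mul_le_setIntegral_energy {u u₂ φ φ' : ℝ → ℝ}
    {a r m L K β c δ : ℝ} (hb : ReflectionBounds u u₂ a r m L K) (hm : 0 < m) (hβ : β ≤ u₂ a)
    (hδ : 0 < δ) (hδr : δ ≤ r) (hδ1 : δ ≤ 1) (hδκ : 8 * reflectionConst m L K * δ ≤ 1)
    (hu : ContinuousOn u (Icc (a - δ) (a + δ))) (hu₂ : ContinuousOn u₂ (Icc (a - δ) (a + δ)))
    (hc : ∀ y ∈ Icc (a - δ) (a + δ), c < u y) (hφ : ContinuousOn φ (Icc (a - δ) (a + δ)))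
    (hφ' : MemLp φ' 2 (volume.restrict (Icc (a - δ) (a + δ))))
    (hφφ' : ∀ x ∈ Icc (a - δ) (a + δ), ∀ y ∈ Icc (a - δ) (a + δ),
      φ y - φ x = ∫ t in x..y, φ' t) :
    -((reflectionConst m L K / √δ + 1) * ∫ y in Icc (a - δ) (a + δ), φ y ^ 2)
      ≤ ∫ y in Icc (a - δ) (a + δ), (φ' y ^ 2 + (u₂ y - β) / (u y - c) * φ y ^ 2) := by
  set I := Icc (a - δ) (a + δ)
  set N := ∫ y in I, φ y ^ 2
  set P := ∫ y in I, φ' y ^ 2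
  have hN : 0 ≤ N := integral_nonneg fun _ => sq_nonneg _
  have hP : 0 ≤ P := integral_nonneg fun _ => sq_nonneg _
  obtain ⟨hS, hD⟩ := abs_le_sqrt_and_abs_sub_reflect_le hδ hφ fun x hx y hy hxy =>
    sq_sub_le_mul_setIntegral_sq hφ' hx.1 hxy hy.2 (hφφ' x hx y hy)
  have hpos : ∀ y ∈ I, 0 < u y - c := fun y hy => sub_pos.2 (hc y hy)
  have hint : ∀ b, IntegrableOn (fun y => (u₂ y - b) / (u y - c) * φ y ^ 2) I := fun b =>
    (((hu₂.sub continuousOn_const).div (hu.sub continuousOn_const) fun y hy => (hpos y hy).ne').mul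
      (hφ.pow 2)).integrableOn_compact isCompact_Icc
  have hmono : ∫ y in I, (u₂ y - u₂ a) / (u y - c) * φ y ^ 2
      ≤ ∫ y in I, (u₂ y - β) / (u y - c) * φ y ^ 2 :=
    setIntegral_mono_on (hint _) (hint _) measurableSet_Icc fun y hy =>
      mul_le_mul_of_nonneg_right (div_le_div_of_nonneg_right (by linarith) (hpos y hy).le)
        (sq_nonneg _)
  have hlow := hb.neg_le_setIntegral hm (hc a ⟨by linarith, by linarith⟩) hδ hδr (hint _) hS hD
  have harith := neg_div_sqrt_mul_le (A₁ := 4 * L / m) (A₂ := K / m) (A₃ := 2 * L ^ 2 / m ^ 2)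
    (N := N) (S := √(N / δ + 4 * δ * P)) (D := √P) (by positivity) hδ hδ1 hδκ hP
    (Real.sq_sqrt hP) (Real.sq_sqrt (by positivity))
  rw [integral_add hφ'.integrable_sq (hint β), add_mul, one_mul]
  unfold reflectionConst
  linarith

theorem umin_le {y₁ y₂ : ℝ} {u : ℝ → ℝ} (hu : ContinuousOn u (Icc y₁ y₂)) {y : ℝ}
    (hy : y ∈ Icc y₁ y₂) : umin y₁ y₂ u ≤ u y :=
  csInf_le (isCompact_Icc.image_of_continuousOn hu).bddBelow ⟨y, hy, rfl⟩

namespace IsH10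

variable {y₁ y₂ : ℝ} {φ φ' : ℝ → ℝ}

theorem integrableOn (hφ : IsH10 y₁ y₂ φ φ') : IntegrableOn φ' (Icc y₁ y₂) :=
  (memLp_Icc_of_memLp_Ioo hφ.1).integrable one_le_two

theorem sub_eq_integral (hφ : IsH10 y₁ y₂ φ φ') {x y : ℝ} (hx : x ∈ Icc y₁ y₂)
    (hy : y ∈ Icc y₁ y₂) : φ y - φ x = ∫ t in x..y, φ' t :=
  sub_eq_integral_of_eq_add_integral (C := 0) hφ.integrableOn
    (fun z hz => by rw [zero_add]; exact hφ.2.1 z hz) hx hy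

theorem continuousOn (hφ : IsH10 y₁ y₂ φ φ') (hy : y₁ ≤ y₂) : ContinuousOn φ (Icc y₁ y₂) := by
  have := intervalIntegral.continuousOn_primitive_interval (μ := volume) (a := y₁) (b := y₂)
    (by rw [uIcc_of_le hy]; exact hφ.integrableOn)
  rw [uIcc_of_le hy] at this
  exact this.congr fun x hx => hφ.2.1 x hx

end IsH10

namespace MemH4

variable {y₁ y₂ : ℝ} {u : ℝ → ℝ}

theorem abs_sub_iteratedDerivWithin_three_le (hu : MemH4 y₁ y₂ u) :
    ∃ K, 0 ≤ K ∧ ∀ x ∈ Icc y₁ y₂, ∀ y ∈ Icc y₁ y₂, x ≤ y →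
      |iteratedDerivWithin 3 u (Icc y₁ y₂) y - iteratedDerivWithin 3 u (Icc y₁ y₂) x|
        ≤ K * √(y - x) := by
  obtain ⟨-, g, hg, hrep⟩ := hu
  have hg' := memLp_Icc_of_memLp_Ioo hg
  set G := ∫ t in Icc y₁ y₂, g t ^ 2
  refine ⟨√G, Real.sqrt_nonneg _, fun x hx y hy hxy => ?_⟩
  rw [← Real.sqrt_mul (integral_nonneg fun _ => sq_nonneg _), mul_comm]
  exact Real.abs_le_sqrt (sq_sub_le_mul_setIntegral_sq hg' hx.1 hxy hy.2
    (sub_eq_integral_of_eq_add_integral (hg'.integrable one_le_two) hrep hx hy))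

theorem exists_reflectionBounds (hy : y₁ < y₂) (hu : MemH4 y₁ y₂ u) {a : ℝ}
    (ha : a ∈ Ioo y₁ y₂) (hmin : IsLocalMin u a) (hγ : 0 < D2 y₁ y₂ u a) :
    ∃ r > 0, Icc (a - r) (a + r) ⊆ Ioo y₁ y₂ ∧ ∃ L K, 0 ≤ K ∧
      ReflectionBounds u (D2 y₁ y₂ u) a r (D2 y₁ y₂ u a / 4) L K := by
  set d : ℕ → ℝ → ℝ := fun k => iteratedDerivWithin k u (Icc y₁ y₂)
  have hderiv : ∀ k < 3, ∀ x ∈ Ioo y₁ y₂, HasDerivAt (d k) (d (k + 1) x) x := fun k hk x hx =>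
    hasDerivAt_iteratedDerivWithin (hu.1.of_le (by norm_cast)) (uniqueDiffOn_Icc hy)
      (Icc_mem_nhds hx.1 hx.2)
  obtain ⟨L, hL⟩ := isCompact_Icc.exists_bound_of_continuousOn
    (hu.1.continuousOn_iteratedDerivWithin le_rfl (uniqueDiffOn_Icc hy))
  obtain ⟨K, hK, hKd⟩ := hu.abs_sub_iteratedDerivWithin_three_le
  have hL0 : 0 ≤ L := (norm_nonneg _).trans (hL a (Ioo_subset_Icc_self ha))
  have hd₁a : d 1 a = 0 := hmin.hasDerivAt_eq_zero (by simpa [d] using hderiv 0 (by norm_num) a ha)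
  set r := min (min (a - y₁) (y₂ - a) / 2) (D2 y₁ y₂ u a / (2 * L + 1))
  have hr : 0 < r := lt_min (by linarith [lt_min (sub_pos.2 ha.1) (sub_pos.2 ha.2)])
    (div_pos hγ (by linarith))
  have hrI : Icc (a - r) (a + r) ⊆ Ioo y₁ y₂ := fun x hx => by
    have hr₁ : r ≤ min (a - y₁) (y₂ - a) / 2 := min_le_left _ _
    exact ⟨by linarith [hx.1, ha.1, min_le_left (a - y₁) (y₂ - a)],
      by linarith [hx.2, ha.2, min_le_right (a - y₁) (y₂ - a)]⟩
  have hLr : 2 * L * r ≤ D2 y₁ y₂ u a := by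
    have h := (le_div_iff₀ (by linarith)).1 (min_le_right (min (a - y₁) (y₂ - a) / 2)
      (D2 y₁ y₂ u a / (2 * L + 1)))
    nlinarith
  refine ⟨r, hr, hrI, L, K * √2, by positivity, reflectionBounds_of_hasDerivAt (by positivity)
    (fun x hx => by simpa [d] using hderiv 0 (by norm_num) x (hrI hx))
    (fun x hx => hderiv 1 (by norm_num) x (hrI hx)) (fun x hx => hderiv 2 (by norm_num) x (hrI hx))
    (fun x hx => by simpa using hL x (Ioo_subset_Icc_self (hrI hx))) (fun t ht => ?_) hd₁a hLr⟩
  have hmem : ∀ x ∈ Icc (a - r) (a + r), x ∈ Icc y₁ y₂ := fun x hx => Ioo_subset_Icc_self (hrI hx)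
  refine (hKd (a - t) (hmem _ ⟨by linarith [ht.2], by linarith [ht.1]⟩) (a + t)
    (hmem _ ⟨by linarith [ht.1], by linarith [ht.2]⟩) (by linarith [ht.1])).trans_eq ?_
  rw [show a + t - (a - t) = 2 * t by ring, Real.sqrt_mul zero_le_two, mul_assoc]

end MemH4

/-- **Lemma 3.2 (2)**: let `u ∈ H⁴(y₁,y₂)`, `a ∈ (y₁,y₂)` with `u(a) = u_min`, and
`0 < β ≤ u''(a)`.  Then there is `δ₀ > 0` such that for every `δ ∈ (0,δ₀]` there is a
constant `C_δ > 0` (depending only on `u`, `a`, `δ`) such that for all `c < u_min` and all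
`φ ∈ H¹₀(y₁,y₂)` the localized energy on `[a−δ,a+δ]` is bounded below by
`−C_δ ∫_{a−δ}^{a+δ} φ²`. -/
theorem localized_energy_lower_bound
    (y₁ y₂ : ℝ) (hy : y₁ < y₂) (u : ℝ → ℝ) (hu : MemH4 y₁ y₂ u)
    (a : ℝ) (ha : a ∈ Set.Ioo y₁ y₂) (hamin : u a = umin y₁ y₂ u)
    (β : ℝ) (hβpos : 0 < β) (hβ : β ≤ D2 y₁ y₂ u a) :
    ∃ δ₀ : ℝ, 0 < δ₀ ∧ Set.Icc (a - δ₀) (a + δ₀) ⊆ Set.Icc y₁ y₂ ∧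
      ∀ δ ∈ Set.Ioc (0 : ℝ) δ₀, ∃ C : ℝ, 0 < C ∧
        ∀ c : ℝ, c < umin y₁ y₂ u →
        ∀ φ φ' : ℝ → ℝ, IsH10 y₁ y₂ φ φ' →
          -(C * ∫ y in Set.Icc (a - δ) (a + δ), (φ y) ^ 2)
            ≤ ∫ y in Set.Icc (a - δ) (a + δ),
                ((φ' y) ^ 2 + ((D2 y₁ y₂ u y - β) / (u y - c)) * (φ y) ^ 2) := by
  have huc : ContinuousOn u (Icc y₁ y₂) := hu.1.continuousOn
  have hmin : IsLocalMin u a :=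
    IsMinOn.isLocalMin (fun y hy => hamin ▸ umin_le huc hy) (Icc_mem_nhds ha.1 ha.2)
  obtain ⟨r, hr, hrI, L, K, hK, hb⟩ := hu.exists_reflectionBounds hy ha hmin (hβpos.trans_le hβ)
  set m := D2 y₁ y₂ u a / 4
  have hm : 0 < m := div_pos (hβpos.trans_le hβ) four_pos
  set κ := reflectionConst m L K
  have hκ : 0 ≤ κ := by unfold κ reflectionConst; positivity
  have hsub : ∀ δ ≤ r, Icc (a - δ) (a + δ) ⊆ Icc y₁ y₂ := fun δ hδ =>
    ((Icc_subset_Icc (by linarith) (by linarith)).trans hrI).trans Ioo_subset_Icc_self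
  refine ⟨min r (min 1 (1 / (8 * κ + 1))), lt_min hr (lt_min one_pos (by positivity)),
    hsub _ (min_le_left _ _),
    fun δ hδ => ⟨κ / √δ + 1, by positivity, fun c hc φ φ' hφ => ?_⟩⟩
  have hδ1 : δ ≤ min 1 (1 / (8 * κ + 1)) := hδ.2.trans (min_le_right _ _)
  have hδκ : 8 * κ * δ ≤ 1 := by
    have := (le_div_iff₀ (by positivity)).1 (hδ1.trans (min_le_right _ _))
    nlinarith [hδ.1]
  have hI := hsub δ (hδ.2.trans (min_le_left _ _))
  exact hb.neg_mul_le_setIntegral_energy hm hβ hδ.1 (hδ.2.trans (min_le_left _ _))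
    (hδ1.trans (min_le_left _ _)) hδκ (huc.mono hI)
    ((hu.1.continuousOn_iteratedDerivWithin (by norm_num) (uniqueDiffOn_Icc hy)).mono hI)
    (fun y hy => hc.trans_le (umin_le huc (hI hy))) ((hφ.continuousOn hy.le).mono hI)
    ((memLp_Icc_of_memLp_Ioo hφ.1).mono_measure (Measure.restrict_mono hI le_rfl))
    fun x hx y hy => hφ.sub_eq_integral (hI hx) (hI hy)
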